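/- Displacement bound for the partial dynamics: there exists a constant C > 0 (depending only on d, U, K) such that for every x ∈ X₀, every n ∈ ℕ, every t > 0, and every solution (q_i^{(n)}, p_i^{(n)})_{i∈Λ_n} on [0,t] of the n-partial dynamics with initial datum x, one has max_{s∈[0,t]} max_{i∈Λ_n} ( |q_i^{(n)}(s) − q_i| + |p_i^{(n)}(s) − p_i| ) ≤ C t ( Q(x) log(e+n) + t⁴ ). -/

import Mathlib

open MeasureTheory Real Filter
open scoped ENNReal

noncomputable section

/-- A site of the `d`-dimensional integer lattice. -/
abbrev Site (d : ℕ) := Fin d → ℤ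

/-- A configuration: at each site, a position `q` and a momentum `p`. -/
abbrev Conf (d : ℕ) := Site d → ℝ × ℝ

/-- ℓ¹ norm on the lattice. -/
def lnorm {d : ℕ} (ν : Site d) : ℤ := ∑ ℓ, |ν ℓ|

/-- ℓ¹ distance on the lattice. -/
def ldist {d : ℕ} (i j : Site d) : ℤ := ∑ ℓ, |i ℓ - j ℓ|

/-- The cube `Λ_{ν,k}` of center `ν` and side `2k+1`. -/
def cube {d : ℕ} (ν : Site d) (k : ℕ) : Finset (Site d) :=
  Fintype.piFinset fun ℓ => Finset.Icc (ν ℓ - (k : ℤ)) (ν ℓ + (k : ℤ))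

/-- The local energy `W_{ν,k}(x)`. -/
noncomputable def Wen {d : ℕ} (U : Polynomial ℝ) (K : ℝ) (ν : Site d) (k : ℕ)
    (x : Conf d) : ℝ :=
  (∑ i ∈ cube ν k, ((x i).2 ^ 2 / 2 + U.eval (x i).1 + 1)) +
    K / 4 * ∑ i ∈ cube ν k, ∑ j ∈ cube ν k,
      (if ldist i j = 1 then ((x i).1 - (x j).1) ^ 2 else 0)

/-- The functional `Q(x) = sup_ν sup_{k > log^{1/d}(e+|ν|)} W_{ν,k}(x)/(2k+1)^d`,
with values in `[0,∞]`. -/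
noncomputable def Qen {d : ℕ} (U : Polynomial ℝ) (K : ℝ) (x : Conf d) : ℝ≥0∞ :=
  ⨆ ν : Site d, ⨆ k : ℕ,
    ⨆ _ : Real.log (Real.exp 1 + (lnorm ν : ℝ)) ^ ((1 : ℝ) / (d : ℝ)) < (k : ℝ),
      ENNReal.ofReal (Wen U K ν k x / (2 * (k : ℝ) + 1) ^ d)

/-- The good set of configurations `X₀ = {x : Q(x) < ∞}`. -/
def X0 (d : ℕ) (U : Polynomial ℝ) (K : ℝ) : Set (Conf d) := {x | Qen U K x < ⊤}

/-- `y` is a solution on `[0,T]` of the `n`-partial dynamics with initial datum `x₀`: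
only the oscillators in the cube `Λ_n = Λ_{0,n}` move, interacting among themselves. -/
def IsPartialSolutionOn {d : ℕ} (U : Polynomial ℝ) (K : ℝ) (x₀ : Conf d) (n : ℕ)
    (T : ℝ) (y : ℝ → Conf d) : Prop :=
  (∀ i ∈ cube (0 : Site d) n, y 0 i = x₀ i) ∧
  ∀ i ∈ cube (0 : Site d) n, ∀ t ∈ Set.Icc (0 : ℝ) T,
    HasDerivWithinAt (fun s => (y s i).1) ((y t i).2) (Set.Icc 0 T) t ∧
    HasDerivWithinAt (fun s => (y s i).2)
      (-(Polynomial.derivative U).eval ((y t i).1)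
        - K * ∑ j ∈ (cube (0 : Site d) n).filter (fun j => ldist i j = 1),
            ((y t i).1 - (y t j).1))
      (Set.Icc 0 T) t

-- neighbor counting
section
open Finset
lemma ldist_one_struct {d : ℕ} {i j : Site d} (h : ldist i j = 1) :
    ∃ ℓ : Fin d, j = Function.update i ℓ (i ℓ + 1) ∨ j = Function.update i ℓ (i ℓ - 1) := by
  classical
  unfold ldist at h
  have hnn : ∀ ℓ : Fin d, 0 ≤ |i ℓ - j ℓ| := fun ℓ => abs_nonneg _
  have hex : ∃ ℓ : Fin d, 1 ≤ |i ℓ - j ℓ| := by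
    by_contra hc
    push_neg at hc
    have : ∑ ℓ, |i ℓ - j ℓ| ≤ 0 := Finset.sum_nonpos (fun ℓ _ => by have := hc ℓ; omega)
    omega
  obtain ⟨ℓ, hℓ⟩ := hex
  have hsum : |i ℓ - j ℓ| + ∑ m ∈ Finset.univ.erase ℓ, |i m - j m| = 1 := by
    rw [Finset.add_sum_erase Finset.univ (fun m => |i m - j m|) (Finset.mem_univ ℓ)]; exact h
  have herasenn : 0 ≤ ∑ m ∈ Finset.univ.erase ℓ, |i m - j m| :=
    Finset.sum_nonneg fun m _ => abs_nonneg _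
  have h1 : |i ℓ - j ℓ| = 1 := by omega
  have h0 : ∑ m ∈ Finset.univ.erase ℓ, |i m - j m| = 0 := by omega
  have hzero : ∀ m ∈ Finset.univ.erase ℓ, |i m - j m| = 0 := by
    intro m hm
    have := (Finset.sum_eq_zero_iff_of_nonneg (fun m _ => abs_nonneg _)).1 h0 m hm
    exact this
  refine ⟨ℓ, ?_⟩
  have hcase : j ℓ = i ℓ + 1 ∨ j ℓ = i ℓ - 1 := by
    rcases abs_eq (by norm_num : (0:ℤ) ≤ 1) |>.1 h1 with h | h <;> omega
  rcases hcase with h | h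
  · left
    funext m
    by_cases hm : m = ℓ
    · subst hm; simp [Function.update, h]
    · have := hzero m (Finset.mem_erase.2 ⟨hm, Finset.mem_univ m⟩)
      have heq : i m = j m := by have := abs_eq_zero.mp this; omega
      simp [Function.update, hm, ← heq]
  · right
    funext m
    by_cases hm : m = ℓ
    · subst hm; simp [Function.update, h]
    · have := hzero m (Finset.mem_erase.2 ⟨hm, Finset.mem_univ m⟩)
      have heq : i m = j m := by have := abs_eq_zero.mp this; omega
      simp [Function.update, hm, ← heq]

lemma nbhd_card {d : ℕ} (i : Site d) (F : Finset (Site d)) :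
    (F.filter (fun j => ldist i j = 1)).card ≤ 2 * d := by
  classical
  have hsub : F.filter (fun j => ldist i j = 1) ⊆
      (Finset.univ : Finset (Fin d × Bool)).image
        (fun p => Function.update i p.1 (i p.1 + if p.2 then 1 else -1)) := by
    intro j hj
    obtain ⟨ℓ, hc⟩ := ldist_one_struct (Finset.mem_filter.1 hj).2
    rcases hc with h | h
    · exact Finset.mem_image.2 ⟨(ℓ, true), Finset.mem_univ _, by simp [h.symm]⟩
    · refine Finset.mem_image.2 ⟨(ℓ, false), Finset.mem_univ _, ?_⟩
      simp only [if_neg Bool.false_ne_true]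
      rw [h]; ring_nf
  calc (F.filter (fun j => ldist i j = 1)).card ≤ _ := Finset.card_le_card hsub
    _ ≤ (Finset.univ : Finset (Fin d × Bool)).card := Finset.card_image_le
    _ = 2 * d := by simp [Finset.card_univ, Fintype.card_prod, Nat.mul_comm]
end
section
open Polynomial

lemma aux_pow_le_cube (q : ℝ) : ∀ k ≤ 3, |q| ^ k ≤ 1 + |q| ^ 3 := by
  intro k hk
  have h0 : (0:ℝ) ≤ |q| := abs_nonneg q
  interval_cases k
  · nlinarith [pow_nonneg h0 3]
  · nlinarith [sq_nonneg (|q| - 1), sq_nonneg (|q| + 1), pow_nonneg h0 3]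
  · nlinarith [sq_nonneg (|q| - 1), pow_nonneg h0 3, sq_nonneg |q|]
  · norm_num

lemma poly_bound₂ (U : Polynomial ℝ) (hUdeg : U.degree = 4) :
    ∃ c : ℝ, 1 ≤ c ∧ ∀ q : ℝ, |(Polynomial.derivative U).eval q| ≤ c * (1 + |q| ^ 3) := by
  have hnd : U.natDegree = 4 := natDegree_eq_of_degree_eq_some hUdeg
  have hlt : (derivative U).natDegree < 4 := by
    have := natDegree_derivative_lt (p := U) (by rw [hnd]; norm_num)
    omega
  set c : ℝ := 1 + ∑ k ∈ Finset.range 4, |(derivative U).coeff k| with hc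
  have hcnn : 1 ≤ c := by
    have : 0 ≤ ∑ k ∈ Finset.range 4, |(derivative U).coeff k| :=
      Finset.sum_nonneg fun k _ => abs_nonneg _
    linarith
  refine ⟨c, hcnn, fun q => ?_⟩
  rw [Polynomial.eval_eq_sum_range' hlt]
  calc |∑ k ∈ Finset.range 4, (derivative U).coeff k * q ^ k|
      ≤ ∑ k ∈ Finset.range 4, |(derivative U).coeff k * q ^ k| := Finset.abs_sum_le_sum_abs _ _
    _ ≤ ∑ k ∈ Finset.range 4, |(derivative U).coeff k| * (1 + |q| ^ 3) := by
        refine Finset.sum_le_sum fun k hk => ?_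
        rw [abs_mul]
        have h1 : |q ^ k| ≤ 1 + |q| ^ 3 := by
          rw [abs_pow]; exact aux_pow_le_cube q k (by simpa using Nat.lt_succ_iff.1 (Finset.mem_range.1 hk))
        exact mul_le_mul_of_nonneg_left h1 (abs_nonneg _)
    _ = (∑ k ∈ Finset.range 4, |(derivative U).coeff k|) * (1 + |q| ^ 3) := by
        rw [← Finset.sum_mul]
    _ ≤ c * (1 + |q| ^ 3) := by
        have h1 : (0:ℝ) ≤ 1 + |q| ^ 3 := by positivity
        nlinarith [Finset.sum_nonneg (fun k (_ : k ∈ Finset.range 4) => abs_nonneg ((derivative U).coeff k))]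

lemma poly_bound₁ (U : Polynomial ℝ) (hUdeg : U.degree = 4) (hUpos : ∀ y : ℝ, 0 ≤ U.eval y) (hUlead : 0 < U.leadingCoeff) :
    ∃ c : ℝ, 1 ≤ c ∧ ∀ q : ℝ, q ^ 4 ≤ c * (U.eval q + 1) := by
  have hnd : U.natDegree = 4 := natDegree_eq_of_degree_eq_some hUdeg
  set a : ℝ := U.leadingCoeff with hadef
  have hlc : U.coeff 4 = a := by rw [hadef, Polynomial.leadingCoeff, hnd]
  set M : ℝ := ∑ k ∈ Finset.range 4, |U.coeff k| with hM
  have hMnn : 0 ≤ M := Finset.sum_nonneg fun k _ => abs_nonneg _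
  set ε : ℝ := a / (2 * (M + 1)) with hε
  have hεpos : 0 < ε := by positivity
  have hkey : ∀ q : ℝ, a * q ^ 4 ≤ U.eval q + M * (1 + |q| ^ 3) := by
    intro q
    have heval : U.eval q = ∑ k ∈ Finset.range 5, U.coeff k * q ^ k := by
      rw [Polynomial.eval_eq_sum_range' (by omega : U.natDegree < 5)]
    have hsplit : U.eval q = (∑ k ∈ Finset.range 4, U.coeff k * q ^ k) + a * q ^ 4 := by
      rw [heval, Finset.sum_range_succ, hlc]
    have hlow : |∑ k ∈ Finset.range 4, U.coeff k * q ^ k| ≤ M * (1 + |q| ^ 3) := by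
      calc |∑ k ∈ Finset.range 4, U.coeff k * q ^ k|
          ≤ ∑ k ∈ Finset.range 4, |U.coeff k * q ^ k| := Finset.abs_sum_le_sum_abs _ _
        _ ≤ ∑ k ∈ Finset.range 4, |U.coeff k| * (1 + |q| ^ 3) := by
            refine Finset.sum_le_sum fun k hk => ?_
            rw [abs_mul]
            refine mul_le_mul_of_nonneg_left ?_ (abs_nonneg _)
            rw [abs_pow]
            exact aux_pow_le_cube q k (by simpa using Nat.lt_succ_iff.1 (Finset.mem_range.1 hk))
        _ = M * (1 + |q| ^ 3) := by rw [hM, Finset.sum_mul]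
    have := abs_le.1 hlow
    nlinarith [this.1, this.2]
  -- |q|^3 ≤ ε q^4 + 1/ε^3
  have hcube : ∀ q : ℝ, |q| ^ 3 ≤ ε * q ^ 4 + 1 / ε ^ 3 := by
    intro q
    have h0 : (0:ℝ) ≤ |q| := abs_nonneg q
    have hq4 : q ^ 4 = |q| ^ 4 := by rw [← abs_pow]; rw [abs_of_nonneg (by positivity)]
    rcases le_or_gt (|q|) (1/ε) with h | h
    · have h3 : |q| ^ 3 ≤ (1/ε) ^ 3 := pow_le_pow_left₀ h0 h 3
      have he : (1/ε) ^ 3 = 1 / ε ^ 3 := by rw [div_pow, one_pow]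
      have h4 : 0 ≤ ε * q ^ 4 := by positivity
      linarith
    · have h1 : 1 ≤ ε * |q| := by
        rw [div_lt_iff₀ hεpos] at h
        nlinarith
      have h2 : |q| ^ 3 * 1 ≤ |q| ^ 3 * (ε * |q|) :=
        mul_le_mul_of_nonneg_left h1 (by positivity)
      have h5 : (0:ℝ) ≤ 1 / ε ^ 3 := by positivity
      calc |q| ^ 3 = |q| ^ 3 * 1 := (mul_one _).symm
        _ ≤ |q| ^ 3 * (ε * |q|) := h2
        _ = ε * |q| ^ 4 := by ring
        _ = ε * q ^ 4 := by rw [← hq4]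
        _ ≤ ε * q ^ 4 + 1 / ε ^ 3 := by linarith
  -- combine
  refine ⟨(2 / a) * (M + M * (1 / ε ^ 3) + 1) + 1, ?_, fun q => ?_⟩
  · have : 0 ≤ (2 / a) * (M + M * (1 / ε ^ 3) + 1) := by positivity
    linarith
  · have hk := hkey q
    have hc := hcube q
    have hM1 : M * (1 + |q| ^ 3) ≤ M + M * (ε * q ^ 4 + 1 / ε ^ 3) := by nlinarith
    have hMε : M * ε ≤ a / 2 := by
      rw [hε, ← sub_nonneg]
      have hrw : a/2 - M*(a/(2*(M+1))) = a / (2*(M+1)) := by field_simp; ring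
      rw [hrw]; positivity
    have hq4 : 0 ≤ q ^ 4 := by positivity
    have h6 : (a / 2) * q ^ 4 ≤ U.eval q + (M + M * (1 / ε ^ 3)) := by nlinarith
    have h7 : q ^ 4 ≤ (2 / a) * (U.eval q + (M + M * (1 / ε ^ 3))) := by
      have h2a : (0:ℝ) < 2/a := by positivity
      calc q^4 = (2/a) * ((a/2) * q^4) := by field_simp
        _ ≤ (2/a) * (U.eval q + (M + M * (1 / ε ^ 3))) := mul_le_mul_of_nonneg_left h6 h2a.le
    have hB : (0:ℝ) ≤ M + M * (1 / ε ^ 3) := by positivity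
    have hU0 : 0 ≤ U.eval q := hUpos q
    have h2a : (0:ℝ) ≤ 2/a := by positivity
    nlinarith [mul_nonneg h2a (mul_nonneg hB hU0)]
end
section
variable {d : ℕ}

lemma Wen_nonneg (U : Polynomial ℝ) (K : ℝ) (hUpos : ∀ y : ℝ, 0 ≤ U.eval y) (hK : 0 ≤ K)
    (ν : Site d) (k : ℕ) (x : Conf d) : 0 ≤ Wen U K ν k x := by
  unfold Wen
  have h1 : 0 ≤ ∑ i ∈ cube ν k, ((x i).2 ^ 2 / 2 + U.eval (x i).1 + 1) :=
    Finset.sum_nonneg fun i _ => by have := hUpos (x i).1; positivity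
  have h2 : 0 ≤ ∑ i ∈ cube ν k, ∑ j ∈ cube ν k,
      (if ldist i j = 1 then ((x i).1 - (x j).1) ^ 2 else 0) :=
    Finset.sum_nonneg fun i _ => Finset.sum_nonneg fun j _ => by positivity
  positivity

lemma Wen_le_Q (U : Polynomial ℝ) (K : ℝ) (hUpos : ∀ y : ℝ, 0 ≤ U.eval y) (hK : 0 ≤ K)
    (x : Conf d) (hx : x ∈ X0 d U K) (ν : Site d) (k : ℕ)
    (hcond : Real.log (Real.exp 1 + (lnorm ν : ℝ)) ^ ((1 : ℝ) / (d : ℝ)) < (k : ℝ)) :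
    Wen U K ν k x ≤ (Qen U K x).toReal * (2 * (k:ℝ) + 1) ^ d := by
  have hterm : ENNReal.ofReal (Wen U K ν k x / (2 * (k : ℝ) + 1) ^ d) ≤ Qen U K x := by
    refine le_trans ?_ (le_iSup _ ν)
    refine le_trans ?_ (le_iSup _ k)
    exact le_iSup (fun _ : Real.log (Real.exp 1 + (lnorm ν : ℝ)) ^ ((1 : ℝ) / (d : ℝ)) < (k : ℝ)
      => ENNReal.ofReal (Wen U K ν k x / (2 * (k : ℝ) + 1) ^ d)) hcond
  have hne : Qen U K x ≠ ⊤ := hx.ne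
  have h2 : Wen U K ν k x / (2 * (k:ℝ) + 1) ^ d ≤ (Qen U K x).toReal := by
    have := ENNReal.toReal_mono hne hterm
    rwa [ENNReal.toReal_ofReal (by
      have := Wen_nonneg U K hUpos hK ν k x
      positivity)] at this
  have hpow : (0:ℝ) < (2 * (k:ℝ) + 1) ^ d := by positivity
  calc Wen U K ν k x = Wen U K ν k x / (2 * (k:ℝ) + 1) ^ d * (2 * (k:ℝ) + 1) ^ d := by
        field_simp
    _ ≤ (Qen U K x).toReal * (2 * (k:ℝ) + 1) ^ d := by
        exact mul_le_mul_of_nonneg_right h2 hpow.le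

lemma lnorm_zero : lnorm (0 : Site d) = 0 := by
  unfold lnorm; simp

lemma card_cube (ν : Site d) (k : ℕ) : (cube ν k).card = (2 * k + 1) ^ d := by
  unfold cube
  rw [Fintype.card_piFinset]
  have : ∀ ℓ : Fin d, (Finset.Icc (ν ℓ - (k:ℤ)) (ν ℓ + (k:ℤ))).card = 2 * k + 1 := by
    intro ℓ
    rw [Int.card_Icc]
    omega
  simp [this]

lemma Q_ge_one (U : Polynomial ℝ) (K : ℝ) (hUpos : ∀ y : ℝ, 0 ≤ U.eval y) (hK : 0 ≤ K)
    (x : Conf d) (hx : x ∈ X0 d U K) : 1 ≤ (Qen U K x).toReal := by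
  have hcond : Real.log (Real.exp 1 + (lnorm (0 : Site d) : ℝ)) ^ ((1 : ℝ) / (d : ℝ))
      < ((2:ℕ) : ℝ) := by
    rw [lnorm_zero]
    push_cast
    rw [add_zero, Real.log_exp, Real.one_rpow]
    norm_num
  have hW : ((2 * (2:ℕ) + 1 : ℝ)) ^ d ≤ Wen U K (0 : Site d) 2 x := by
    have h1 : ∀ i ∈ cube (0 : Site d) 2, (1:ℝ) ≤ (x i).2 ^ 2 / 2 + U.eval (x i).1 + 1 := by
      intro i _
      have := hUpos (x i).1
      nlinarith [sq_nonneg (x i).2]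
    have hcard := card_cube (0 : Site d) 2
    have hsum : ((cube (0 : Site d) 2).card : ℝ) ≤
        ∑ i ∈ cube (0 : Site d) 2, ((x i).2 ^ 2 / 2 + U.eval (x i).1 + 1) := by
      calc ((cube (0 : Site d) 2).card : ℝ) = ∑ _i ∈ cube (0 : Site d) 2, (1:ℝ) := by
            rw [Finset.sum_const]; simp
        _ ≤ _ := Finset.sum_le_sum h1
    have h2 : 0 ≤ K / 4 * ∑ i ∈ cube (0 : Site d) 2, ∑ j ∈ cube (0 : Site d) 2,
        (if ldist i j = 1 then ((x i).1 - (x j).1) ^ 2 else 0) := by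
      have : 0 ≤ ∑ i ∈ cube (0 : Site d) 2, ∑ j ∈ cube (0 : Site d) 2,
          (if ldist i j = 1 then ((x i).1 - (x j).1) ^ 2 else 0) :=
        Finset.sum_nonneg fun i _ => Finset.sum_nonneg fun j _ => by positivity
      positivity
    unfold Wen
    rw [hcard] at hsum
    push_cast at hsum ⊢
    linarith
  have hle := Wen_le_Q U K hUpos hK x hx (0 : Site d) 2 hcond
  have hpow : (0:ℝ) < (2 * ((2:ℕ):ℝ) + 1) ^ d := by positivity
  nlinarith [hle, hW]
end
section
variable {d : ℕ}

lemma mem_cube_self (ν : Site d) (k : ℕ) : ν ∈ cube ν k := by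
  unfold cube
  rw [Fintype.mem_piFinset]
  intro ℓ
  rw [Finset.mem_Icc]
  omega

lemma one_le_L (n : ℕ) : 1 ≤ Real.log (Real.exp 1 + (n:ℝ)) := by
  calc (1:ℝ) = Real.log (Real.exp 1) := (Real.log_exp 1).symm
    _ ≤ Real.log (Real.exp 1 + (n:ℝ)) := by
      apply Real.log_le_log (Real.exp_pos 1)
      have : (0:ℝ) ≤ (n:ℝ) := Nat.cast_nonneg n
      linarith

set_option maxHeartbeats 1000000 in
lemma init_bound (hd : 0 < d) (U : Polynomial ℝ) (K : ℝ)
    (hUpos : ∀ y : ℝ, 0 ≤ U.eval y) (hK : 0 ≤ K)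
    (x : Conf d) (hx : x ∈ X0 d U K) (n : ℕ) (i : Site d) (hi : i ∈ cube (0 : Site d) n) :
    (x i).2 ^ 2 / 2 + U.eval (x i).1 + 1 ≤
      ((5*d : ℕ) : ℝ) ^ d * (Qen U K x).toReal * Real.log (Real.exp 1 + (n:ℝ)) := by
  set L : ℝ := Real.log (Real.exp 1 + (n:ℝ)) with hLdef
  have hL1 : 1 ≤ L := one_le_L n
  have hdR : (1:ℝ) ≤ (d:ℝ) := by exact_mod_cast hd
  -- lnorm i ≤ d * n
  have hlnorm : (lnorm i : ℝ) ≤ (d:ℝ) * (n:ℝ) := by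
    have : lnorm i ≤ (d:ℤ) * (n:ℤ) := by
      unfold lnorm
      calc ∑ ℓ, |i ℓ| ≤ ∑ _ℓ : Fin d, (n:ℤ) := by
            refine Finset.sum_le_sum fun ℓ _ => ?_
            have hmem : i ℓ ∈ Finset.Icc ((0:Site d) ℓ - (n:ℤ)) ((0:Site d) ℓ + (n:ℤ)) := by
              have := (Fintype.mem_piFinset.1 hi) ℓ
              exact this
            rw [Finset.mem_Icc] at hmem
            have h0 : (0:Site d) ℓ = 0 := rfl
            rw [h0] at hmem
            exact abs_le.mpr ⟨by omega, by omega⟩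
        _ = (d:ℤ) * (n:ℤ) := by rw [Finset.sum_const]; simp [mul_comm]
    exact_mod_cast this
  have hlognn2 : 0 ≤ Real.log (Real.exp 1 + (d:ℝ)*(n:ℝ)) := by
    apply Real.log_nonneg
    have : (0:ℝ) ≤ (d:ℝ)*(n:ℝ) := by positivity
    linarith [Real.add_one_le_exp 1]
  set A : ℝ := (Real.log (Real.exp 1 + ((d:ℝ) * (n:ℝ)))) ^ ((1:ℝ)/(d:ℝ)) with hAdef
  have hAnn : 0 ≤ A := Real.rpow_nonneg hlognn2 _
  set k₀ : ℕ := ⌊A⌋₊ + 1 with hk₀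
  -- the admissibility condition
  have hlog_mono : Real.log (Real.exp 1 + (lnorm i : ℝ)) ≤ Real.log (Real.exp 1 + (d:ℝ)*(n:ℝ)) := by
    apply Real.log_le_log
    · have h0 : (0:ℝ) ≤ (lnorm i : ℝ) := by
        have : (0:ℤ) ≤ lnorm i := Finset.sum_nonneg fun ℓ _ => abs_nonneg _
        exact_mod_cast this
      linarith [Real.exp_pos 1]
    · linarith
  have hlognn : 0 ≤ Real.log (Real.exp 1 + (lnorm i : ℝ)) := by
    have h0 : (0:ℝ) ≤ (lnorm i : ℝ) := by
      have : (0:ℤ) ≤ lnorm i := Finset.sum_nonneg fun ℓ _ => abs_nonneg _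
      exact_mod_cast this
    have : (1:ℝ) ≤ Real.exp 1 + (lnorm i : ℝ) := by linarith [Real.add_one_le_exp 1]
    exact Real.log_nonneg this
  have hcond : Real.log (Real.exp 1 + (lnorm i : ℝ)) ^ ((1 : ℝ) / (d : ℝ)) < (k₀ : ℝ) := by
    have h1 : Real.log (Real.exp 1 + (lnorm i : ℝ)) ^ ((1 : ℝ) / (d : ℝ)) ≤ A :=
      Real.rpow_le_rpow hlognn hlog_mono (by positivity)
    have h2 : A < (k₀ : ℝ) := by
      rw [hk₀]
      push_cast
      exact Nat.lt_floor_add_one A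
    linarith
  have hWle := Wen_le_Q U K hUpos hK x hx i k₀ hcond
  -- site term ≤ Wen
  have hsite : (x i).2 ^ 2 / 2 + U.eval (x i).1 + 1 ≤ Wen U K i k₀ x := by
    unfold Wen
    have h1 : (x i).2 ^ 2 / 2 + U.eval (x i).1 + 1 ≤
        ∑ j ∈ cube i k₀, ((x j).2 ^ 2 / 2 + U.eval (x j).1 + 1) :=
      Finset.single_le_sum (f := fun j => (x j).2 ^ 2 / 2 + U.eval (x j).1 + 1)
        (fun j _ => by have := hUpos (x j).1; positivity) (mem_cube_self i k₀)
    have h2 : 0 ≤ K / 4 * ∑ a ∈ cube i k₀, ∑ b ∈ cube i k₀,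
        (if ldist a b = 1 then ((x a).1 - (x b).1) ^ 2 else 0) := by
      have : 0 ≤ ∑ a ∈ cube i k₀, ∑ b ∈ cube i k₀,
          (if ldist a b = 1 then ((x a).1 - (x b).1) ^ 2 else 0) :=
        Finset.sum_nonneg fun a _ => Finset.sum_nonneg fun b _ => by positivity
      positivity
    linarith
  -- cube size bound : (2 k₀ + 1)^d ≤ (5d)^d L
  have hA_le : A ≤ (d:ℝ) * L ^ ((1:ℝ)/(d:ℝ)) := by
    have hlog2 : Real.log (Real.exp 1 + (d:ℝ)*(n:ℝ)) ≤ (d:ℝ) * L := by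
      have hstep : Real.exp 1 + (d:ℝ)*(n:ℝ) ≤ (d:ℝ) * (Real.exp 1 + (n:ℝ)) := by
        have h1 : Real.exp 1 ≤ (d:ℝ) * Real.exp 1 := by nlinarith [Real.exp_pos 1]
        nlinarith [Nat.cast_nonneg (α := ℝ) n]
      calc Real.log (Real.exp 1 + (d:ℝ)*(n:ℝ)) ≤ Real.log ((d:ℝ) * (Real.exp 1 + (n:ℝ))) := by
            apply Real.log_le_log (by positivity) hstep
        _ = Real.log (d:ℝ) + L := by
            rw [Real.log_mul (by positivity) (by positivity)]
        _ ≤ ((d:ℝ) - 1) + L := by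
            have := Real.log_le_sub_one_of_pos (x := (d:ℝ)) (by positivity)
            linarith
        _ ≤ (d:ℝ) * L := by nlinarith
    calc A ≤ ((d:ℝ) * L) ^ ((1:ℝ)/(d:ℝ)) :=
          Real.rpow_le_rpow hlognn2 hlog2 (by positivity)
      _ = (d:ℝ) ^ ((1:ℝ)/(d:ℝ)) * L ^ ((1:ℝ)/(d:ℝ)) := by
          rw [Real.mul_rpow (by positivity) (by linarith)]
      _ ≤ (d:ℝ) * L ^ ((1:ℝ)/(d:ℝ)) := by
          have h1 : (d:ℝ) ^ ((1:ℝ)/(d:ℝ)) ≤ (d:ℝ) ^ (1:ℝ) := by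
            apply Real.rpow_le_rpow_of_exponent_le hdR
            rw [div_le_one (by linarith)]
            linarith
          rw [Real.rpow_one] at h1
          have h2 : (0:ℝ) ≤ L ^ ((1:ℝ)/(d:ℝ)) := by positivity
          nlinarith
  have hLr1 : 1 ≤ L ^ ((1:ℝ)/(d:ℝ)) := Real.one_le_rpow hL1 (by positivity)
  have hk₀le : (k₀ : ℝ) ≤ A + 1 := by
    rw [hk₀]
    push_cast
    have := Nat.floor_le hAnn
    linarith
  have hsize : (2 * (k₀:ℝ) + 1) ≤ ((5*d:ℕ):ℝ) * L ^ ((1:ℝ)/(d:ℝ)) := by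
    have hcast : ((5*d:ℕ):ℝ) = 5 * (d:ℝ) := by push_cast; ring
    rw [hcast]
    have h5 : (1:ℝ) ≤ (d:ℝ) * L ^ ((1:ℝ)/(d:ℝ)) := by
      calc (1:ℝ) = 1 * 1 := by norm_num
        _ ≤ (d:ℝ) * L ^ ((1:ℝ)/(d:ℝ)) := mul_le_mul hdR hLr1 (by norm_num) (by linarith)
    linarith [hk₀le, hA_le]
  have hpowd : (2 * (k₀:ℝ) + 1) ^ d ≤ ((5*d:ℕ):ℝ) ^ d * L := by
    have h1 : (2 * (k₀:ℝ) + 1) ^ d ≤ (((5*d:ℕ):ℝ) * L ^ ((1:ℝ)/(d:ℝ))) ^ d :=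
      pow_le_pow_left₀ (by positivity) hsize d
    have h2 : (((5*d:ℕ):ℝ) * L ^ ((1:ℝ)/(d:ℝ))) ^ d = ((5*d:ℕ):ℝ) ^ d * (L ^ ((1:ℝ)/(d:ℝ))) ^ d := by
      rw [mul_pow]
    have h3 : (L ^ ((1:ℝ)/(d:ℝ))) ^ d = L := by
      rw [← Real.rpow_natCast (L ^ ((1:ℝ)/(d:ℝ))) d, ← Real.rpow_mul (by linarith : (0:ℝ) ≤ L)]
      rw [one_div, inv_mul_cancel₀ (by positivity : (d:ℝ) ≠ 0), Real.rpow_one]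
    rw [h2, h3] at h1
    exact h1
  have hQ1 : 1 ≤ (Qen U K x).toReal := Q_ge_one U K hUpos hK x hx
  calc (x i).2 ^ 2 / 2 + U.eval (x i).1 + 1 ≤ (Qen U K x).toReal * (2 * (k₀:ℝ) + 1) ^ d :=
        le_trans hsite hWle
    _ ≤ (Qen U K x).toReal * (((5*d:ℕ):ℝ) ^ d * L) := by
        apply mul_le_mul_of_nonneg_left hpowd (by linarith)
    _ = ((5*d:ℕ):ℝ) ^ d * (Qen U K x).toReal * L := by ring
end
section
open Set

lemma barrier {ι : Type*} (Λ : Finset ι) (t : ℝ) (ht : 0 < t)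
    (e D : ι → ℝ → ℝ) (a C₁ : ℝ) (ha : 1 ≤ a) (hC₁ : 0 < C₁)
    (hderiv : ∀ i ∈ Λ, ∀ s ∈ Set.Icc (0:ℝ) t, HasDerivWithinAt (e i) (D i s) (Set.Icc 0 t) s)
    (hD : ∀ i ∈ Λ, ∀ s ∈ Set.Icc (0:ℝ) t, (∀ j ∈ Λ, e j s ≤ (a + C₁*s)^4) →
      |D i s| ≤ 4*C₁*(a + C₁*s)^3)
    (h0 : ∀ i ∈ Λ, e i 0 + 1 ≤ a^4) :
    ∀ s ∈ Set.Icc (0:ℝ) t, ∀ i ∈ Λ, e i s ≤ (a + C₁*s)^4 := by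
  classical
  have hcont : ∀ i ∈ Λ, ContinuousOn (e i) (Icc 0 t) := fun i hi =>
    fun s hs => (hderiv i hi s hs).continuousWithinAt
  set A : Set ℝ := {s | s ∈ Icc (0:ℝ) t ∧ ∃ i ∈ Λ, (a + C₁*s)^4 ≤ e i s} with hA
  have hAempty : A = ∅ := by
    by_contra hne
    have hne' : A.Nonempty := Set.nonempty_iff_ne_empty.2 hne
    have hclosed : IsClosed A := by
      have hrw : A = ⋃ i ∈ (Λ : Set ι), {s | s ∈ Icc (0:ℝ) t ∧ (a + C₁*s)^4 ≤ e i s} := by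
        ext s
        simp only [hA, Set.mem_setOf_eq, Set.mem_iUnion, Finset.mem_coe]
        constructor
        · rintro ⟨hs, i, hi, hie⟩; exact ⟨i, hi, hs, hie⟩
        · rintro ⟨i, hi, hs, hie⟩; exact ⟨hs, i, hi, hie⟩
      rw [hrw]
      refine Set.Finite.isClosed_biUnion (Λ.finite_toSet) (fun i hi => ?_)
      have hconti : ContinuousOn (fun s => e i s - (a + C₁*s)^4) (Icc 0 t) := by
        apply ContinuousOn.sub (hcont i hi)
        exact (continuous_const.add (continuous_const.mul continuous_id)).pow 4 |>.continuousOn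
      have : {s | s ∈ Icc (0:ℝ) t ∧ (a + C₁*s)^4 ≤ e i s}
          = Icc (0:ℝ) t ∩ (fun s => e i s - (a + C₁*s)^4) ⁻¹' (Ici 0) := by
        ext s
        simp only [Set.mem_setOf_eq, Set.mem_inter_iff, Set.mem_preimage, Set.mem_Ici]
        constructor
        · rintro ⟨hs, h⟩; exact ⟨hs, by linarith⟩
        · rintro ⟨hs, h⟩; exact ⟨hs, by linarith⟩
      rw [this]
      exact hconti.preimage_isClosed_of_isClosed isClosed_Icc isClosed_Ici
    have hbdd : BddBelow A := ⟨0, fun s hs => hs.1.1⟩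
    set u : ℝ := sInf A with hu
    have huA : u ∈ A := hclosed.csInf_mem hne' hbdd
    obtain ⟨⟨hu0, hut⟩, i, hiΛ, hieu⟩ := huA
    have hu_ne : u ≠ 0 := by
      intro h
      have h1 := h0 i hiΛ
      rw [h] at hieu
      have : (a + C₁*0)^4 = a^4 := by ring
      rw [this] at hieu
      linarith
    have hu_pos : 0 < u := lt_of_le_of_ne hu0 (Ne.symm hu_ne)
    have hbelow : ∀ r ∈ Icc (0:ℝ) t, r < u → ∀ j ∈ Λ, e j r ≤ (a + C₁*r)^4 := by
      intro r hr hru j hj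
      by_contra hc
      push_neg at hc
      have : r ∈ A := ⟨hr, j, hj, hc.le⟩
      have := csInf_le hbdd this
      rw [← hu] at this
      linarith
    -- the comparison function
    set ψ : ℝ → ℝ := fun r => e i r - (a + C₁*r)^4 with hψ
    have hψcont : ContinuousOn ψ (Icc 0 u) := by
      apply ContinuousOn.sub
      · exact (hcont i hiΛ).mono (Icc_subset_Icc le_rfl hut)
      · exact ((continuous_const.add (continuous_const.mul continuous_id)).pow 4).continuousOn
    have hψderiv : ∀ r ∈ interior (Icc (0:ℝ) u),
        HasDerivAt ψ (D i r - 4*(a + C₁*r)^3*C₁) r := by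
      intro r hr
      rw [interior_Icc] at hr
      have hrt : r ∈ Icc (0:ℝ) t := ⟨hr.1.le, le_trans hr.2.le hut⟩
      have hmem : Icc (0:ℝ) t ∈ nhds r := Icc_mem_nhds hr.1 (lt_of_lt_of_le hr.2 hut)
      have h1 : HasDerivAt (e i) (D i r) r := (hderiv i hiΛ r hrt).hasDerivAt hmem
      have h2 : HasDerivAt (fun s : ℝ => (a + C₁*s)^4) (4*(a + C₁*r)^3*C₁) r := by
        have hb : HasDerivAt (fun s : ℝ => a + C₁*s) C₁ r := by
          simpa using ((hasDerivAt_id r).const_mul C₁).const_add a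
        have := hb.fun_pow 4
        refine this.congr_deriv ?_
        all_goals (try push_cast); (try ring)
      exact h1.sub h2
    have hψanti : AntitoneOn ψ (Icc 0 u) := by
      apply antitoneOn_of_deriv_nonpos (convex_Icc 0 u) hψcont
      · intro r hr
        exact (hψderiv r hr).differentiableAt.differentiableWithinAt
      · intro r hr
        rw [(hψderiv r hr).deriv]
        have hr' := hr
        rw [interior_Icc] at hr'
        have hrt : r ∈ Icc (0:ℝ) t := ⟨hr'.1.le, le_trans hr'.2.le hut⟩
        have hbnd := hD i hiΛ r hrt (hbelow r hrt hr'.2)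
        have h1 : 0 ≤ (a + C₁*r)^3 := by
          have : 0 < a + C₁*r := by nlinarith [hr'.1]
          positivity
        have := abs_le.1 hbnd
        nlinarith [this.2]
    have hfinal : ψ u ≤ ψ 0 :=
      hψanti ⟨le_rfl, hu0⟩ ⟨hu0, le_rfl⟩ hu0
    have hψ0 : ψ 0 ≤ -1 := by
      have h1 := h0 i hiΛ
      simp only [hψ]
      have : (a + C₁*0)^4 = a^4 := by ring
      rw [this]
      linarith
    have hψu : 0 ≤ ψ u := by simp only [hψ]; linarith
    linarith
  intro s hs i hi
  by_contra hc
  push_neg at hc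
  have : s ∈ A := ⟨hs, i, hi, hc.le⟩
  rw [hAempty] at this
  exact this
end

set_option maxHeartbeats 2000000

/-- Displacement bound for the partial dynamics:
`max_{s∈[0,t]} max_{i∈Λ_n} (|q_i^{(n)}(s)-q_i| + |p_i^{(n)}(s)-p_i|)
  ≤ C t (Q(x) log(e+n) + t⁴)`, with `C` depending only on `d`, `U`, `K`. -/
theorem statement14 {d : ℕ} (hd : 0 < d) (U : Polynomial ℝ) (hUdeg : U.degree = 4)
    (hUpos : ∀ y : ℝ, 0 ≤ U.eval y) (hUlead : 0 < U.leadingCoeff)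
    (K : ℝ) (hK : 0 < K) :
    ∃ C > (0:ℝ), ∀ x ∈ X0 d U K, ∀ n : ℕ, ∀ t : ℝ, 0 < t →
      ∀ y : ℝ → Conf d, IsPartialSolutionOn U K x n t y →
      ∀ s ∈ Set.Icc (0:ℝ) t, ∀ i ∈ cube (0 : Site d) n,
        |(y s i).1 - (x i).1| + |(y s i).2 - (x i).2| ≤
          C * t * ((Qen U K x).toReal * Real.log (Real.exp 1 + (n:ℝ)) + t ^ 4) := by
  classical
  obtain ⟨c₁, hc₁1, hc₁⟩ := poly_bound₁ U hUdeg hUpos hUlead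
  obtain ⟨c₂, hc₂1, hc₂⟩ := poly_bound₂ U hUdeg
  have hdR : (1:ℝ) ≤ (d:ℝ) := by exact_mod_cast hd
  have hd0 : (0:ℝ) < (d:ℝ) := by linarith
  have hc₁0 : (0:ℝ) < c₁ := by linarith
  have hc₂0 : (0:ℝ) < c₂ := by linarith
  set C₁ : ℝ := 2*(d:ℝ)*K*c₁ with hC₁def
  have hC₁pos : 0 < C₁ := by
    rw [hC₁def]
    exact mul_pos (mul_pos (mul_pos (by norm_num) hd0) hK) hc₁0
  set C₅ : ℝ := 2*c₂*c₁^3 + 4*(d:ℝ)*K*c₁ with hC₅def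
  have hC₅pos : 0 < C₅ := by
    rw [hC₅def]
    have h1 : 0 < 2*c₂*c₁^3 := mul_pos (mul_pos (by norm_num) hc₂0) (pow_pos hc₁0 3)
    have h2 : 0 < 4*(d:ℝ)*K*c₁ := mul_pos (mul_pos (mul_pos (by norm_num) hd0) hK) hc₁0
    linarith
  set C₇ : ℝ := 4*(((5*d:ℕ):ℝ)^d + 1 + C₁^3) with hC₇def
  have h5d1 : (1:ℝ) ≤ ((5*d:ℕ):ℝ)^d := by
    apply one_le_pow₀
    have : (1:ℕ) ≤ 5*d := by omega
    exact_mod_cast this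
  have hC₇pos : 0 < C₇ := by
    rw [hC₇def]
    have := pow_pos hC₁pos 3
    linarith
  refine ⟨(2+C₅)*C₇, mul_pos (by linarith) hC₇pos, ?_⟩
  intro x hx n t ht y hsol s hs i hi
  set Λ : Finset (Site d) := cube (0 : Site d) n with hΛ
  set L : ℝ := Real.log (Real.exp 1 + (n:ℝ)) with hLdef
  have hL1 : 1 ≤ L := one_le_L n
  set Qr : ℝ := (Qen U K x).toReal with hQrdef
  have hQr1 : 1 ≤ Qr := Q_ge_one U K hUpos hK.le x hx
  set G₀ : ℝ := ((5*d:ℕ):ℝ)^d * Qr * L with hG₀def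
  have hXQ : 1 ≤ ((5*d:ℕ):ℝ)^d * Qr := by
    calc (1:ℝ) = 1*1 := by norm_num
      _ ≤ ((5*d:ℕ):ℝ)^d * Qr := mul_le_mul h5d1 hQr1 (by norm_num) (by linarith)
  have hG₀1 : 1 ≤ G₀ := by
    rw [hG₀def]
    calc (1:ℝ) = 1*1 := by norm_num
      _ ≤ ((5*d:ℕ):ℝ)^d * Qr * L := mul_le_mul hXQ hL1 (by norm_num) (by linarith)
  set a : ℝ := (G₀+1) ^ ((1:ℝ)/4) with hadef
  have ha4 : a^(4:ℕ) = G₀ + 1 := by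
    rw [hadef, ← Real.rpow_natCast ((G₀+1) ^ ((1:ℝ)/4)) 4,
      ← Real.rpow_mul (by linarith : (0:ℝ) ≤ G₀+1)]
    norm_num
  have ha1 : 1 ≤ a := Real.one_le_rpow (by linarith) (by norm_num)
  -- the energies and their derivatives
  set eE : Site d → ℝ → ℝ := fun j r => (y r j).2^2/2 + U.eval (y r j).1 + 1 with heE
  set FF : Site d → ℝ → ℝ := fun j r =>
    -(Polynomial.derivative U).eval ((y r j).1)
      - K * ∑ m ∈ Λ.filter (fun m => ldist j m = 1), ((y r j).1 - (y r m).1) with hFF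
  set DD : Site d → ℝ → ℝ := fun j r =>
    (y r j).2 * FF j r + (Polynomial.derivative U).eval ((y r j).1) * (y r j).2 with hDD
  have hder : ∀ j ∈ Λ, ∀ r ∈ Set.Icc (0:ℝ) t,
      HasDerivWithinAt (eE j) (DD j r) (Set.Icc 0 t) r := by
    intro j hj r hr
    obtain ⟨hq', hp'⟩ := hsol.2 j hj r hr
    have h1 : HasDerivWithinAt (fun w => (y w j).2^2/2) ((y r j).2 * FF j r)
        (Set.Icc 0 t) r := by
      have h2 := (hp'.fun_pow 2).div_const 2
      refine h2.congr_deriv ?_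
      push_cast
      simp only [hFF]
      ring
    have h3 : HasDerivWithinAt (fun w => U.eval (y w j).1)
        ((Polynomial.derivative U).eval ((y r j).1) * (y r j).2) (Set.Icc 0 t) r :=
      by have h := (U.hasDerivAt ((y r j).1)).comp_hasDerivWithinAt r hq'; exact h
    have h4 := (h1.add h3).add_const 1
    exact h4
  -- bound on sums of neighbours
  have hSbound : ∀ j : Site d, ∀ r : ℝ, ∀ b : ℝ, 1 ≤ b →
      (∀ m ∈ Λ, eE m r ≤ b^4) → j ∈ Λ →
      |∑ m ∈ Λ.filter (fun m => ldist j m = 1), ((y r j).1 - (y r m).1)| ≤ 4*(d:ℝ)*c₁*b := by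
    intro j r b hb hall hj
    have hq : ∀ m ∈ Λ, |(y r m).1| ≤ c₁ * b := by
      intro m hm
      have he := hall m hm
      have h4 : ((y r m).1)^4 ≤ c₁ * (U.eval (y r m).1 + 1) := hc₁ _
      have hU1 : U.eval (y r m).1 + 1 ≤ eE m r := by
        simp only [heE]
        nlinarith [sq_nonneg (y r m).2]
      have hb0 : (0:ℝ) < b := by linarith
      have hc₁4 : c₁ ≤ c₁^4 := le_self_pow₀ hc₁1 (by norm_num)
      have hb4 : (0:ℝ) ≤ b^4 := by positivity
      have h5 : ((y r m).1)^4 ≤ (c₁ * b)^4 := by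
        calc ((y r m).1)^4 ≤ c₁ * (U.eval (y r m).1 + 1) := h4
          _ ≤ c₁ * b^4 := mul_le_mul_of_nonneg_left (by linarith) hc₁0.le
          _ ≤ c₁^4 * b^4 := mul_le_mul_of_nonneg_right hc₁4 hb4
          _ = (c₁ * b)^4 := by ring
      have h6 : |(y r m).1|^4 ≤ (c₁*b)^4 := by
        rw [pow_abs, abs_of_nonneg (by positivity : (0:ℝ) ≤ ((y r m).1)^4)]
        exact h5
      exact (pow_le_pow_iff_left₀ (abs_nonneg _) (by positivity) (by norm_num)).1 h6
    calc |∑ m ∈ Λ.filter (fun m => ldist j m = 1), ((y r j).1 - (y r m).1)|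
        ≤ ∑ m ∈ Λ.filter (fun m => ldist j m = 1), |(y r j).1 - (y r m).1| :=
          Finset.abs_sum_le_sum_abs _ _
      _ ≤ ∑ _m ∈ Λ.filter (fun m => ldist j m = 1), (2*c₁*b) := by
          refine Finset.sum_le_sum fun m hm => ?_
          have hm' : m ∈ Λ := Finset.mem_filter.1 hm |>.1
          have h1 := hq m hm'
          have h2 := hq j hj
          calc |(y r j).1 - (y r m).1| ≤ |(y r j).1| + |(y r m).1| := abs_sub _ _
            _ ≤ 2*c₁*b := by linarith
      _ = ((Λ.filter (fun m => ldist j m = 1)).card : ℝ) * (2*c₁*b) := by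
          rw [Finset.sum_const, nsmul_eq_mul]
      _ ≤ (2*(d:ℝ)) * (2*c₁*b) := by
          have hcard := nbhd_card j Λ
          have h1 : ((Λ.filter (fun m => ldist j m = 1)).card : ℝ) ≤ 2*(d:ℝ) := by
            exact_mod_cast hcard
          have h2 : (0:ℝ) ≤ 2*c₁*b := by positivity
          nlinarith
      _ = 4*(d:ℝ)*c₁*b := by ring
  have hpbound : ∀ j : Site d, ∀ r : ℝ, ∀ b : ℝ, 1 ≤ b → eE j r ≤ b^4 →
      |(y r j).2| ≤ 2*b^2 := by
    intro j r b hb he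
    have h1 : ((y r j).2)^2 ≤ 2*b^4 := by
      have := hUpos (y r j).1
      simp only [heE] at he
      nlinarith
    have h2 : |(y r j).2|^2 ≤ (2*b^2)^2 := by
      rw [pow_abs, abs_of_nonneg (by positivity : (0:ℝ) ≤ ((y r j).2)^2)]
      nlinarith
    exact (pow_le_pow_iff_left₀ (abs_nonneg _) (by positivity) (by norm_num)).1 h2
  have hDb : ∀ j ∈ Λ, ∀ r ∈ Set.Icc (0:ℝ) t, (∀ m ∈ Λ, eE m r ≤ (a + C₁*r)^4) →
      |DD j r| ≤ 4*C₁*(a + C₁*r)^3 := by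
    intro j hj r hr hall
    have hb1 : 1 ≤ a + C₁*r := by nlinarith [hr.1]
    have hS := hSbound j r (a + C₁*r) hb1 hall hj
    have hp := hpbound j r (a + C₁*r) hb1 (hall j hj)
    have hDDeq : DD j r = -K * ((y r j).2 *
        ∑ m ∈ Λ.filter (fun m => ldist j m = 1), ((y r j).1 - (y r m).1)) := by
      simp only [hDD, hFF]
      ring
    rw [hDDeq, abs_mul, abs_mul]
    have hKabs : |(-K)| = K := by rw [abs_neg, abs_of_pos hK]
    rw [hKabs]
    have hb0 : (0:ℝ) < a + C₁*r := by linarith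
    calc K * (|(y r j).2| * |∑ m ∈ Λ.filter (fun m => ldist j m = 1),
          ((y r j).1 - (y r m).1)|)
        ≤ K * ((2*(a + C₁*r)^2) * (4*(d:ℝ)*c₁*(a + C₁*r))) := by
          apply mul_le_mul_of_nonneg_left _ hK.le
          apply mul_le_mul hp hS (abs_nonneg _) (by positivity)
      _ = 4*C₁*(a + C₁*r)^3 := by rw [hC₁def]; ring
  have h0 : ∀ j ∈ Λ, eE j 0 + 1 ≤ a^4 := by
    intro j hj
    have hinit := hsol.1 j hj
    have := init_bound hd U K hUpos hK.le x hx n j hj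
    simp only [heE, hinit]
    rw [ha4]
    rw [hG₀def]
    linarith
  have hbar := barrier Λ t ht eE DD a C₁ ha1 hC₁pos hder hDb h0
  -- displacement bounds
  have hbtub : ∀ r ∈ Set.Icc (0:ℝ) t, a + C₁*r ≤ a + C₁*t := by
    intro r hr
    nlinarith [hr.2]
  have hbt1 : 1 ≤ a + C₁*t := by nlinarith
  have hqdisp : |(y s i).1 - (x i).1| ≤ (2*(a + C₁*t)^2) * t := by
    have hMV := Convex.norm_image_sub_le_of_norm_hasDerivWithin_le
      (f := fun r => (y r i).1) (f' := fun r => (y r i).2) (s := Set.Icc (0:ℝ) t)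
      (C := 2*(a + C₁*t)^2) (fun r hr => (hsol.2 i hi r hr).1)
      (fun r hr => by
        have hb1 : 1 ≤ a + C₁*r := by nlinarith [hr.1]
        have hp := hpbound i r (a + C₁*r) hb1 (hbar r hr i hi)
        have h2 : (a + C₁*r)^2 ≤ (a + C₁*t)^2 := by nlinarith [hbtub r hr]
        rw [Real.norm_eq_abs]
        linarith)
      (convex_Icc 0 t) (Set.left_mem_Icc.2 ht.le) hs
    rw [hsol.1 i hi] at hMV
    rw [Real.norm_eq_abs, Real.norm_eq_abs] at hMV
    have habs0 : |s - 0| = s := by rw [sub_zero, abs_of_nonneg hs.1]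
    rw [habs0] at hMV
    calc |(y s i).1 - (x i).1| ≤ 2*(a + C₁*t)^2 * s := hMV
      _ ≤ 2*(a + C₁*t)^2 * t := by
          apply mul_le_mul_of_nonneg_left hs.2
          nlinarith [hbt1]
  have hpdisp : |(y s i).2 - (x i).2| ≤ (C₅*(a + C₁*t)^3) * t := by
    have hMV := Convex.norm_image_sub_le_of_norm_hasDerivWithin_le
      (f := fun r => (y r i).2) (f' := fun r => FF i r) (s := Set.Icc (0:ℝ) t)
      (C := C₅*(a + C₁*t)^3)
      (fun r hr => by
        have := (hsol.2 i hi r hr).2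
        exact this)
      (fun r hr => by
        have hb1 : 1 ≤ a + C₁*r := by nlinarith [hr.1]
        have hball := hbar r hr
        have hS := hSbound i r (a + C₁*r) hb1 (fun m hm => hball m hm) hi
        -- |q_i| bound
        have he := hball i hi
        have h4 : ((y r i).1)^4 ≤ c₁ * (U.eval (y r i).1 + 1) := hc₁ _
        have hU1 : U.eval (y r i).1 + 1 ≤ eE i r := by
          simp only [heE]
          nlinarith [sq_nonneg (y r i).2]
        have hb0 : (0:ℝ) < a + C₁*r := by linarith
        have hc₁4 : c₁ ≤ c₁^4 := le_self_pow₀ hc₁1 (by norm_num)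
        have hbr4 : (0:ℝ) ≤ (a + C₁*r)^4 := by positivity
        have h5 : ((y r i).1)^4 ≤ (c₁ * (a + C₁*r))^4 := by
          calc ((y r i).1)^4 ≤ c₁ * (U.eval (y r i).1 + 1) := h4
            _ ≤ c₁ * (a + C₁*r)^4 := mul_le_mul_of_nonneg_left (by linarith) hc₁0.le
            _ ≤ c₁^4 * (a + C₁*r)^4 := mul_le_mul_of_nonneg_right hc₁4 hbr4
            _ = (c₁ * (a + C₁*r))^4 := by ring
        have h6 : |(y r i).1| ≤ c₁ * (a + C₁*r) := by
          have h7 : |(y r i).1|^4 ≤ (c₁*(a + C₁*r))^4 := by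
            rw [pow_abs, abs_of_nonneg (by positivity : (0:ℝ) ≤ ((y r i).1)^4)]
            exact h5
          exact (pow_le_pow_iff_left₀ (abs_nonneg _) (by positivity) (by norm_num)).1 h7
        have hU' := hc₂ ((y r i).1)
        rw [Real.norm_eq_abs]
        simp only [hFF]
        have habs : |(-(Polynomial.derivative U).eval ((y r i).1)
            - K * ∑ m ∈ Λ.filter (fun m => ldist i m = 1), ((y r i).1 - (y r m).1))|
            ≤ |(Polynomial.derivative U).eval ((y r i).1)|
              + K * |∑ m ∈ Λ.filter (fun m => ldist i m = 1), ((y r i).1 - (y r m).1)| := by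
          calc _ ≤ |(-(Polynomial.derivative U).eval ((y r i).1))|
                + |K * ∑ m ∈ Λ.filter (fun m => ldist i m = 1), ((y r i).1 - (y r m).1)| :=
              abs_sub _ _
            _ = _ := by rw [abs_neg, abs_mul, abs_of_pos hK]
        have hbr : a + C₁*r ≤ a + C₁*t := hbtub r hr
        have hcube1 : |(y r i).1|^3 ≤ (c₁ * (a + C₁*r))^3 :=
          pow_le_pow_left₀ (abs_nonneg _) h6 3
        have hb3 : (a + C₁*r)^3 ≤ (a + C₁*t)^3 := pow_le_pow_left₀ (by linarith) hbr 3
        have hb3' : 1 ≤ (a + C₁*t)^3 := one_le_pow₀ hbt1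
        have hchain : |(Polynomial.derivative U).eval ((y r i).1)|
            ≤ 2*c₂*c₁^3*(a + C₁*t)^3 := by
          have h8 : |(y r i).1|^3 ≤ c₁^3*(a + C₁*t)^3 := by
            calc |(y r i).1|^3 ≤ (c₁ * (a + C₁*r))^3 := hcube1
              _ = c₁^3 * (a + C₁*r)^3 := by ring
              _ ≤ c₁^3*(a + C₁*t)^3 := mul_le_mul_of_nonneg_left hb3 (pow_nonneg hc₁0.le 3)
          have hbt3nn : (0:ℝ) ≤ (a + C₁*t)^3 := by nlinarith [hbt1]
          have h9 : (1:ℝ) ≤ c₁^3 := one_le_pow₀ hc₁1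
          calc |(Polynomial.derivative U).eval ((y r i).1)| ≤ c₂ * (1 + |(y r i).1|^3) := hU'
            _ ≤ c₂ * ((a + C₁*t)^3 + c₁^3*(a + C₁*t)^3) :=
                mul_le_mul_of_nonneg_left (by linarith) hc₂0.le
            _ = c₂ * (1 + c₁^3) * (a + C₁*t)^3 := by ring
            _ ≤ c₂ * (2*c₁^3) * (a + C₁*t)^3 := by
                apply mul_le_mul_of_nonneg_right _ hbt3nn
                exact mul_le_mul_of_nonneg_left (by linarith) hc₂0.le
            _ = 2*c₂*c₁^3*(a + C₁*t)^3 := by ring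
        have hchain2 : K * |∑ m ∈ Λ.filter (fun m => ldist i m = 1),
            ((y r i).1 - (y r m).1)| ≤ 4*(d:ℝ)*K*c₁*(a + C₁*t)^3 := by
          have htrans : a + C₁*r ≤ (a + C₁*t)^3 :=
            le_trans hbr (le_self_pow₀ hbt1 (by norm_num))
          calc K * |∑ m ∈ Λ.filter (fun m => ldist i m = 1), ((y r i).1 - (y r m).1)|
              ≤ K * (4*(d:ℝ)*c₁*(a + C₁*r)) := mul_le_mul_of_nonneg_left hS hK.le
            _ = (4*(d:ℝ)*K*c₁)*(a + C₁*r) := by ring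
            _ ≤ (4*(d:ℝ)*K*c₁)*(a + C₁*t)^3 := by
                apply mul_le_mul_of_nonneg_left htrans
                exact (mul_pos (mul_pos (mul_pos (by norm_num) hd0) hK) hc₁0).le
            _ = 4*(d:ℝ)*K*c₁*(a + C₁*t)^3 := by ring
        calc _ ≤ _ := habs
          _ ≤ 2*c₂*c₁^3*(a + C₁*t)^3 + 4*(d:ℝ)*K*c₁*(a + C₁*t)^3 := by linarith
          _ = C₅*(a + C₁*t)^3 := by rw [hC₅def]; ring)
      (convex_Icc 0 t) (Set.left_mem_Icc.2 ht.le) hs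
    rw [hsol.1 i hi] at hMV
    rw [Real.norm_eq_abs, Real.norm_eq_abs] at hMV
    have habs0 : |s - 0| = s := by rw [sub_zero, abs_of_nonneg hs.1]
    rw [habs0] at hMV
    calc |(y s i).2 - (x i).2| ≤ C₅*(a + C₁*t)^3 * s := hMV
      _ ≤ C₅*(a + C₁*t)^3 * t := by
          apply mul_le_mul_of_nonneg_left hs.2
          exact mul_nonneg hC₅pos.le (by nlinarith [hbt1])
  -- final arithmetic
  have hkey : (a + C₁*t)^3 ≤ C₇ * (Qr*L + t^4) := by
    have ha0 : (0:ℝ) ≤ a := by linarith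
    have ht3 : t^3 ≤ 1 + t^4 := by nlinarith [sq_nonneg (t-1), sq_nonneg t, sq_nonneg (t*t-t), ht.le]
    have h1 : (a + C₁*t)^3 ≤ 4*(a^3 + (C₁*t)^3) := by
      nlinarith [mul_nonneg (sq_nonneg (a - C₁*t)) (by nlinarith [mul_pos hC₁pos ht] : (0:ℝ) ≤ a + C₁*t)]
    have h2 : a^3 ≤ a^4 := by
      nlinarith [mul_le_mul_of_nonneg_left ha1 (pow_nonneg ha0 3)]
    have hQL1 : 1 ≤ Qr * L := by
      calc (1:ℝ) = 1*1 := by norm_num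
        _ ≤ Qr * L := mul_le_mul hQr1 hL1 (by norm_num) (by linarith)
    have h4 : a^4 = G₀ + 1 := by exact_mod_cast ha4
    have h5 : G₀ + 1 ≤ (((5*d:ℕ):ℝ)^d + 1) * (Qr*L) := by
      rw [hG₀def]; nlinarith [hQL1]
    have h6 : C₁^3*t^3 ≤ C₁^3 + C₁^3*t^4 := by
      have := mul_le_mul_of_nonneg_left ht3 (pow_pos hC₁pos 3).le
      nlinarith [this]
    have h7 : (0:ℝ) ≤ t^4 := by positivity
    have f5 : 4*C₁^3 ≤ 4*C₁^3*(Qr*L) := by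
      nlinarith [mul_nonneg (by linarith : (0:ℝ) ≤ Qr*L - 1) (pow_pos hC₁pos 3).le]
    have f6 : (0:ℝ) ≤ ((5*d:ℕ):ℝ)^d * t^4 := mul_nonneg (by linarith) h7
    rw [hC₇def]
    nlinarith [h1, h2, h4, h5, h6, f5, f6, h7]
  have hfin : |(y s i).1 - (x i).1| + |(y s i).2 - (x i).2| ≤ (2 + C₅)*(a + C₁*t)^3*t := by
    have h1 : 2*(a + C₁*t)^2 ≤ 2*(a + C₁*t)^3 := by
      nlinarith [mul_nonneg (pow_nonneg (by linarith : (0:ℝ) ≤ a + C₁*t) 2)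
        (by linarith : (0:ℝ) ≤ a + C₁*t - 1)]
    have h2 := mul_le_mul_of_nonneg_right h1 ht.le
    linarith [hqdisp, hpdisp, h2]
  calc |(y s i).1 - (x i).1| + |(y s i).2 - (x i).2| ≤ (2 + C₅)*(a + C₁*t)^3*t := hfin
    _ ≤ (2 + C₅)*(C₇ * (Qr*L + t^4))*t := by
        apply mul_le_mul_of_nonneg_right _ ht.le
        exact mul_le_mul_of_nonneg_left hkey (by linarith)
    _ = (2+C₅)*C₇ * t * (Qr * L + t^4) := by ring
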